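/- Let T > 0, α > 0, n, m ∈ ℕ, and let I be a finite index set with, for each i ∈ I, a predicate function h_i : ℝ^n → ℝ and an activity set A : ℝ → Set I. Let f : (ℝ^n × ℝ^m) → ℝ^n, g : (ℝ^n × ℝ) → ℝ^m, and let B : (ℝ^n × ℝ) → ℝ be continuously differentiable such that for all (y, s) ∈ ℝ^n × [0, T], the inner product of ∂B/∂x(y, s) with f(y, g(y, s)), plus ∂B/∂t(y, s), is at least -α · B(y, s). Suppose that for every t ∈ [0, T], the set {y ∈ ℝ^n : B(y, t) ≥ 0} is contained in {y ∈ ℝ^n : h_i(y) ≥ 0 for all i ∈ A(t)}. Let x : ℝ → ℝ^n be differentiable on [0, T] with x'(t) = f(x(t), g(x(t), t)) for all t ∈ [0, T] and B(x(0), 0) ≥ 0. Then for every t ∈ [0, T] and every i ∈ A(t), h_i(x(t)) ≥ 0. -/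

import Mathlib

open RealInnerProductSpace

/-! Along the closed-loop trajectory, `φ t = B (x t, t)` satisfies `φ' ≥ -α φ` by the chain rule
and the barrier condition, so `t ↦ exp (α t) φ t` is nondecreasing on `[0, T]`. Hence `φ` stays
nonnegative, i.e. `x t` remains in the zero-superlevel set of `B (·, t)`, which lies in the
safe set. -/

open Set

section PartialDerivatives

variable {E : Type*} [NormedAddCommGroup E] [InnerProductSpace ℝ E] [CompleteSpace E]
  {B : E × ℝ → ℝ}

theorem DifferentiableAt.fderiv_apply_eq_inner_gradient_add {y : E} {s : ℝ}
    (hB : DifferentiableAt ℝ B (y, s)) (v : E) (c : ℝ) :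
    fderiv ℝ B (y, s) (v, c) =
      ⟪gradient (fun z => B (z, s)) y, v⟫ + c * deriv (fun τ => B (y, τ)) s := by
  have hspace : fderiv ℝ (fun z => B (z, s)) y = (fderiv ℝ B (y, s)).comp (.inl ℝ E ℝ) :=
    (hB.hasFDerivAt.comp y (hasFDerivAt_prodMk_left y s)).fderiv
  have htime : deriv (fun τ => B (y, τ)) s = fderiv ℝ B (y, s) (0, 1) :=
    (hB.hasFDerivAt.comp s (hasFDerivAt_prodMk_right y s)).hasDerivAt.deriv
  have hsplit : ((v, c) : E × ℝ) = (v, 0) + c • (0, 1) := by simp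
  rw [inner_gradient_left, hspace, htime, hsplit, map_add, map_smul]
  simp

theorem hasDerivAt_comp_prodMk_self {x : ℝ → E} {v : E} {s : ℝ}
    (hx : HasDerivAt x v s) (hB : DifferentiableAt ℝ B (x s, s)) :
    HasDerivAt (fun τ => B (x τ, τ))
      (⟪gradient (fun z => B (z, s)) (x s), v⟫ + deriv (fun τ => B (x s, τ)) s) s := by
  have h := hB.hasFDerivAt.comp_hasDerivAt (f := fun τ => (x τ, τ)) s (hx.prodMk (hasDerivAt_id s))
  rwa [hB.fderiv_apply_eq_inner_gradient_add, one_mul] at h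

end PartialDerivatives

section Comparison

variable {φ φ' : ℝ → ℝ} {α a b : ℝ}

theorem monotoneOn_exp_mul_of_neg_mul_le_deriv
    (hφ : ∀ s ∈ Icc a b, HasDerivAt φ (φ' s) s) (hφ' : ∀ s ∈ Icc a b, -α * φ s ≤ φ' s) :
    MonotoneOn (fun s => Real.exp (α * s) * φ s) (Icc a b) := by
  have hψ : ∀ s ∈ Icc a b, HasDerivAt (fun s => Real.exp (α * s) * φ s)
      (Real.exp (α * s) * (α * φ s + φ' s)) s := by
    intro s hs
    have hexp : HasDerivAt (fun s => Real.exp (α * s)) (Real.exp (α * s) * α) s := by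
      simpa using ((hasDerivAt_id s).const_mul α).exp
    exact (hexp.mul (hφ s hs)).congr_deriv (by ring)
  refine monotoneOn_of_deriv_nonneg (convex_Icc a b)
    (fun s hs => (hψ s hs).continuousAt.continuousWithinAt)
    (fun s hs => (hψ s (interior_subset hs)).differentiableAt.differentiableWithinAt)
    (fun s hs => ?_)
  rw [(hψ s (interior_subset hs)).deriv]
  have hlower := hφ' s (interior_subset hs)
  exact mul_nonneg (Real.exp_pos _).le (by linarith)

theorem nonneg_of_neg_mul_le_deriv
    (hφ : ∀ s ∈ Icc a b, HasDerivAt φ (φ' s) s) (hφ' : ∀ s ∈ Icc a b, -α * φ s ≤ φ' s)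
    (ha : 0 ≤ φ a) {t : ℝ} (ht : t ∈ Icc a b) : 0 ≤ φ t := by
  have hmono := monotoneOn_exp_mul_of_neg_mul_le_deriv hφ hφ' ⟨le_rfl, ht.1.trans ht.2⟩ ht ht.1
  have hweighted : 0 ≤ Real.exp (α * t) * φ t :=
    le_trans (mul_nonneg (Real.exp_pos _).le ha) hmono
  exact nonneg_of_mul_nonneg_right hweighted (Real.exp_pos _)

end Comparison

theorem stmt_6_general (T α : ℝ) (n m : ℕ)
    (ι : Type*) (h : ι → EuclideanSpace ℝ (Fin n) → ℝ)
    (A : ℝ → Set ι)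
    (f : EuclideanSpace ℝ (Fin n) × EuclideanSpace ℝ (Fin m) → EuclideanSpace ℝ (Fin n))
    (g : EuclideanSpace ℝ (Fin n) × ℝ → EuclideanSpace ℝ (Fin m))
    (B : EuclideanSpace ℝ (Fin n) × ℝ → ℝ) (hB : ContDiff ℝ 1 B)
    (hcbf : ∀ (y : EuclideanSpace ℝ (Fin n)), ∀ s ∈ Set.Icc (0 : ℝ) T,
      ⟪gradient (fun z => B (z, s)) y, f (y, g (y, s))⟫
        + deriv (fun τ => B (y, τ)) s ≥ -α * B (y, s))
    (hsub : ∀ t ∈ Set.Icc (0 : ℝ) T,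
      {y : EuclideanSpace ℝ (Fin n) | 0 ≤ B (y, t)} ⊆
        {y : EuclideanSpace ℝ (Fin n) | ∀ i ∈ A t, 0 ≤ h i y})
    (x : ℝ → EuclideanSpace ℝ (Fin n))
    (hx : ∀ t ∈ Set.Icc (0 : ℝ) T, HasDerivAt x (f (x t, g (x t, t))) t)
    (hx0 : 0 ≤ B (x 0, 0)) :
    ∀ t ∈ Set.Icc (0 : ℝ) T, ∀ i ∈ A t, 0 ≤ h i (x t) := by
  intro t ht
  refine hsub t ht ?_
  have hBd : Differentiable ℝ B := hB.differentiable one_ne_zero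
  exact nonneg_of_neg_mul_le_deriv (φ := fun s => B (x s, s))
    (fun s hs => hasDerivAt_comp_prodMk_self (hx s hs) (hBd _))
    (fun s hs => hcbf (x s) s hs) hx0 ht

/-- Theorem 2 of the paper with linear class-K function: if the zero-superlevel
set of the barrier `B (·, t)` is contained in the time-varying STL safe set
`{y | h i y ≥ 0 for all active i}` for every `t ∈ [0, T]`, then the closed-loop
trajectory satisfies all active predicates at every time. -/
theorem stmt_6 (T α : ℝ) (hT : 0 < T) (hα : 0 < α) (n m : ℕ)
    (ι : Type*) [Fintype ι] (h : ι → EuclideanSpace ℝ (Fin n) → ℝ)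
    (A : ℝ → Set ι)
    (f : EuclideanSpace ℝ (Fin n) × EuclideanSpace ℝ (Fin m) → EuclideanSpace ℝ (Fin n))
    (g : EuclideanSpace ℝ (Fin n) × ℝ → EuclideanSpace ℝ (Fin m))
    (B : EuclideanSpace ℝ (Fin n) × ℝ → ℝ) (hB : ContDiff ℝ 1 B)
    (hcbf : ∀ (y : EuclideanSpace ℝ (Fin n)), ∀ s ∈ Set.Icc (0 : ℝ) T,
      ⟪gradient (fun z => B (z, s)) y, f (y, g (y, s))⟫
        + deriv (fun τ => B (y, τ)) s ≥ -α * B (y, s))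
    (hsub : ∀ t ∈ Set.Icc (0 : ℝ) T,
      {y : EuclideanSpace ℝ (Fin n) | 0 ≤ B (y, t)} ⊆
        {y : EuclideanSpace ℝ (Fin n) | ∀ i ∈ A t, 0 ≤ h i y})
    (x : ℝ → EuclideanSpace ℝ (Fin n))
    (hx : ∀ t ∈ Set.Icc (0 : ℝ) T, HasDerivAt x (f (x t, g (x t, t))) t)
    (hx0 : 0 ≤ B (x 0, 0)) :
    ∀ t ∈ Set.Icc (0 : ℝ) T, ∀ i ∈ A t, 0 ≤ h i (x t) :=
  stmt_6_general T α n m ι h A f g B hB hcbf hsub x hx hx0
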